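/- arXiv:1310.7462 — 2 statements merged into one kernel-verified Lean document; each statement's English description precedes it below -/
import Mathlib

section
/- Under the posterior π(κ | x, τ) ∝ κ^{a-1/2}(1-κ)^{-a-1} L((1/τ²)(1/κ-1)) e^{-κx²/2}, for each fixed τ > 0 and each fixed η ∈ (0,1), P(κ ≤ η | x, τ) → 1 as x → ∞. -/
/-!
Write the posterior density as `g κ * exp (-κ x² / 2)` with `g` independent of `x`. The
substitution `t = (1/κ - 1)/τ²`, with `|dt/dκ| = 1/(τ² κ²)`, turns `t^(-a-1) L t dt` into
`τ^(2a) κ^(a-1) (1-κ)^(-a-1) L(t) dκ`, which dominates `g`; so `g` is integrable on `(0,1)`.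
Fix `δ < η`. The mass on `(η,1)` is at most `e^(-η x²/2) ∫ g`, while the mass on `(0,η]` is at
least `e^(-δ x²/2) ∫_(0,δ] g > 0`, so their ratio decays like `e^(-(η-δ) x²/2)`.
-/

open MeasureTheory Filter Set Topology

/-- The unnormalized posterior density of the shrinkage coefficient `κ ∈ (0,1)`
given observation `x` and global parameter `τ`. -/
noncomputable def postDens (a : ℝ) (L : ℝ → ℝ) (τ x κ : ℝ) : ℝ :=
  κ ^ (a - 1/2) * (1 - κ) ^ (-a - 1) * L ((1 / τ ^ 2) * (1 / κ - 1)) *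
    Real.exp (-(κ * x ^ 2) / 2)

open Real

lemma mul_one_div_sub_one_pos {c κ : ℝ} (hc : 0 < c) (hκ : κ ∈ Ioo 0 1) : 0 < c * (1 / κ - 1) :=
  mul_pos hc (sub_pos.2 ((one_lt_div hκ.1).2 hκ.2))

lemma image_mul_one_div_sub_one_Ioo {c : ℝ} (hc : 0 < c) :
    (fun κ => c * (1 / κ - 1)) '' Ioo 0 1 = Ioi 0 := by
  refine (image_subset_iff.2 fun κ hκ => mul_one_div_sub_one_pos hc hκ).antisymm fun t ht => ?_
  have ht : 0 < t := ht
  refine ⟨c / (c + t), ⟨by positivity, (div_lt_one (by positivity)).2 (by linarith)⟩, ?_⟩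
  field_simp
  ring

lemma integrableOn_Ioo_div_sq_mul_comp_iff {c : ℝ} (hc : 0 < c) (F : ℝ → ℝ) :
    IntegrableOn (fun κ => c / κ ^ 2 * F (c * (1 / κ - 1))) (Ioo 0 1) ↔
      IntegrableOn F (Ioi 0) := by
  have hderiv : ∀ κ ∈ Ioo (0 : ℝ) 1,
      HasDerivWithinAt (fun κ => c * (1 / κ - 1)) (c * -(κ ^ 2)⁻¹) (Ioo 0 1) κ := fun κ hκ => by
    simpa only [one_div] using
      (((hasDerivAt_inv hκ.1.ne').sub_const 1).const_mul c).hasDerivWithinAt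
  have hinj : InjOn (fun κ => c * (1 / κ - 1)) (Ioo 0 1) := fun κ₁ h₁ κ₂ h₂ h => by
    simpa using (mul_right_injective₀ hc.ne' h : 1 / κ₁ - 1 = 1 / κ₂ - 1)
  rw [← image_mul_one_div_sub_one_Ioo hc,
    integrableOn_image_iff_integrableOn_abs_deriv_smul measurableSet_Ioo hderiv hinj]
  refine integrableOn_congr_fun (fun κ hκ => ?_) measurableSet_Ioo
  rw [smul_eq_mul, abs_mul, abs_neg, abs_of_pos hc, abs_of_pos (by have := hκ.1; positivity)]
  ring

lemma div_sq_mul_rpow_mul_one_div_sub_one {a c κ : ℝ} (hc : 0 < c) (hκ : κ ∈ Ioo 0 1) :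
    c / κ ^ 2 * (c * (1 / κ - 1)) ^ (-a - 1) = c ^ (-a) * κ ^ (a - 1) * (1 - κ) ^ (-a - 1) := by
  obtain ⟨h0, h1⟩ := hκ
  have h1κ : 0 < 1 - κ := sub_pos.2 h1
  rw [show c * (1 / κ - 1) = c * (1 - κ) * κ⁻¹ by field_simp,
    mul_rpow (by positivity) (by positivity), mul_rpow hc.le h1κ.le, inv_rpow h0.le,
    ← rpow_neg h0.le, show -(-a - 1) = (a - 1) + 2 by ring, rpow_add h0, rpow_two,
    show -a - 1 = -a + -1 by ring, rpow_add hc, rpow_neg_one]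
  field_simp

lemma integrableOn_rpow_mul_one_sub_rpow_mul_comp {a c : ℝ} {L : ℝ → ℝ} (hc : 0 < c)
    (hL : Measurable L) (hL0 : ∀ t > 0, 0 ≤ L t)
    (hF : IntegrableOn (fun t => t ^ (-a - 1) * L t) (Ioi 0)) :
    IntegrableOn (fun κ => κ ^ (a - 1/2) * (1 - κ) ^ (-a - 1) * L (c * (1 / κ - 1))) (Ioo 0 1) := by
  refine (((integrableOn_Ioo_div_sq_mul_comp_iff hc _).2 hF).const_mul (c ^ a)).mono'
    (by fun_prop) (ae_restrict_of_forall_mem measurableSet_Ioo fun κ hκ => ?_)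
  have h0 := hκ.1
  have h1κ : 0 < 1 - κ := sub_pos.2 hκ.2
  have hLκ := hL0 _ (mul_one_div_sub_one_pos hc hκ)
  calc ‖κ ^ (a - 1/2) * (1 - κ) ^ (-a - 1) * L (c * (1 / κ - 1))‖
      = κ ^ (a - 1/2) * (1 - κ) ^ (-a - 1) * L (c * (1 / κ - 1)) := norm_of_nonneg (by positivity)
    _ ≤ κ ^ (a - 1) * (1 - κ) ^ (-a - 1) * L (c * (1 / κ - 1)) := by
        gcongr ?_ * _ * _
        exact rpow_le_rpow_of_exponent_ge h0 hκ.2.le (by linarith)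
    _ = c ^ a * (c / κ ^ 2 * ((c * (1 / κ - 1)) ^ (-a - 1) * L (c * (1 / κ - 1)))) := by
        rw [← mul_assoc (c / κ ^ 2), div_sq_mul_rpow_mul_one_div_sub_one hc hκ, ← mul_assoc,
          ← mul_assoc, ← mul_assoc, ← rpow_add hc, add_neg_cancel, rpow_zero, one_mul]

section ExponentialTilting

variable {g : ℝ → ℝ}

lemma MeasureTheory.IntegrableOn.mul_exp_neg_mul {A : Set ℝ} (hg : IntegrableOn g A)
    (hA : MeasurableSet A) (hAb : Bornology.IsBounded A) (s : ℝ) :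
    IntegrableOn (fun κ => g κ * exp (-(κ * s))) A :=
  hg.mul_continuousOn_of_subset (by fun_prop) hA hAb.isCompact_closure subset_closure

lemma setIntegral_mul_exp_neg_mul_le {η u s : ℝ} (hg : IntegrableOn g (Ioo η u))
    (hg0 : ∀ κ ∈ Ioo η u, 0 ≤ g κ) (hs : 0 ≤ s) :
    ∫ κ in Ioo η u, g κ * exp (-(κ * s)) ≤ (∫ κ in Ioo η u, g κ) * exp (-(η * s)) := by
  rw [← integral_mul_const]
  refine setIntegral_mono_on (hg.mul_exp_neg_mul measurableSet_Ioo (Metric.isBounded_Ioo η u) s)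
    (hg.mul_const _) measurableSet_Ioo fun κ hκ => ?_
  have := hg0 κ hκ
  have := hκ.1.le
  gcongr

lemma le_setIntegral_Ioc_mul_exp_neg_mul {l δ η s : ℝ} (hg : IntegrableOn g (Ioc l η))
    (hg0 : ∀ κ ∈ Ioc l η, 0 ≤ g κ) (hδη : δ ≤ η) (hs : 0 ≤ s) :
    (∫ κ in Ioc l δ, g κ) * exp (-(δ * s)) ≤ ∫ κ in Ioc l η, g κ * exp (-(κ * s)) := by
  have hδ : Ioc l δ ⊆ Ioc l η := Ioc_subset_Ioc_right hδη
  have hgδ : IntegrableOn g (Ioc l δ) := hg.mono_set hδ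
  calc (∫ κ in Ioc l δ, g κ) * exp (-(δ * s))
      ≤ ∫ κ in Ioc l δ, g κ * exp (-(κ * s)) := by
        rw [← integral_mul_const]
        refine setIntegral_mono_on (hgδ.mul_const _)
          (hgδ.mul_exp_neg_mul measurableSet_Ioc (Metric.isBounded_Ioc l δ) s) measurableSet_Ioc
          fun κ hκ => ?_
        have := hg0 κ (hδ hκ)
        have := hκ.2
        gcongr
    _ ≤ ∫ κ in Ioc l η, g κ * exp (-(κ * s)) :=
        setIntegral_mono_set (hg.mul_exp_neg_mul measurableSet_Ioc (Metric.isBounded_Ioc l η) s)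
          (ae_restrict_of_forall_mem measurableSet_Ioc
            fun κ hκ => mul_nonneg (hg0 κ hκ) (exp_nonneg _))
          hδ.eventuallyLE

lemma tendsto_div_add_nhds_one {α : Type*} {f : Filter α} {N T : α → ℝ}
    (hN : ∀ᶠ x in f, N x ≠ 0) (hTN : Tendsto (fun x => T x / N x) f (𝓝 0)) :
    Tendsto (fun x => N x / (N x + T x)) f (𝓝 1) := by
  have hlim := (tendsto_const_nhds.add hTN).inv₀ (by norm_num : (1 : ℝ) + 0 ≠ 0)
  rw [add_zero, inv_one] at hlim
  refine hlim.congr' (hN.mono fun x hx => ?_)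
  field_simp

lemma tendsto_div_nhds_zero_of_exp_bounds {N T : ℝ → ℝ} {c C δ η : ℝ} (hc : 0 < c)
    (hδη : δ < η) (hT0 : ∀ᶠ s in atTop, 0 ≤ T s) (hT : ∀ᶠ s in atTop, T s ≤ C * exp (-(η * s)))
    (hN : ∀ᶠ s in atTop, c * exp (-(δ * s)) ≤ N s) :
    Tendsto (fun s => T s / N s) atTop (𝓝 0) := by
  have hbound : Tendsto (fun s => C / c * exp (-((η - δ) * s))) atTop (𝓝 0) := by
    simpa using (tendsto_exp_neg_atTop_nhds_zero.comp
      (tendsto_id.const_mul_atTop (sub_pos.2 hδη))).const_mul (C / c)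
  have hNpos : ∀ᶠ s in atTop, 0 < N s := hN.mono fun s hs => (mul_pos hc (exp_pos _)).trans_le hs
  refine tendsto_of_tendsto_of_tendsto_of_le_of_le' tendsto_const_nhds hbound
    (hT0.and hNpos |>.mono fun s hs => div_nonneg hs.1 hs.2.le) ?_
  filter_upwards [hT0, hT, hN] with s hs0 hsT hsN
  calc T s / N s ≤ C * exp (-(η * s)) / (c * exp (-(δ * s))) :=
        div_le_div₀ (hs0.trans hsT) hsT (by positivity) hsN
    _ = C / c * exp (-((η - δ) * s)) := by rw [mul_div_mul_comm, ← exp_sub]; ring_nf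

lemma setIntegral_Ioo_eq_Ioc_add_Ioo {E : Type*} [NormedAddCommGroup E] [NormedSpace ℝ E]
    {f : ℝ → E} {l η u : ℝ} (hf : IntegrableOn f (Ioo l u)) (hη : η ∈ Ioo l u) :
    ∫ x in Ioo l u, f x = (∫ x in Ioc l η, f x) + ∫ x in Ioo η u, f x := by
  rw [← Ioc_union_Ioo_eq_Ioo hη.1.le hη.2] at hf ⊢
  exact setIntegral_union (Ioc_disjoint_Ioi_same.mono_right Ioo_subset_Ioi_self)
    measurableSet_Ioo (hf.mono_set subset_union_left) (hf.mono_set subset_union_right)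

theorem tendsto_setIntegral_Ioc_mul_exp_div_setIntegral_Ioo {l η u : ℝ}
    (hg : IntegrableOn g (Ioo l u)) (hpos : ∀ κ ∈ Ioo l u, 0 < g κ) (hη : η ∈ Ioo l u) :
    Tendsto (fun s => (∫ κ in Ioc l η, g κ * exp (-(κ * s))) /
      ∫ κ in Ioo l u, g κ * exp (-(κ * s))) atTop (𝓝 1) := by
  obtain ⟨δ, hlδ, hδη⟩ := exists_between hη.1
  have hIoc : Ioc l η ⊆ Ioo l u := fun κ hκ => ⟨hκ.1, hκ.2.trans_lt hη.2⟩
  have hIoo : Ioo η u ⊆ Ioo l u := Ioo_subset_Ioo_left hη.1.le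
  have hc : 0 < ∫ κ in Ioc l δ, g κ := by
    rw [← intervalIntegral.integral_of_le hlδ.le]
    exact intervalIntegral.intervalIntegral_pos_of_pos_on
      ((intervalIntegrable_iff_integrableOn_Ioc_of_le hlδ.le).2
        (hg.mono_set ((Ioc_subset_Ioc_right hδη.le).trans hIoc)))
      (fun κ hκ => hpos κ ⟨hκ.1, hκ.2.trans (hδη.trans hη.2)⟩) hlδ
  have hN := fun s (hs : 0 ≤ s) => le_setIntegral_Ioc_mul_exp_neg_mul (hg.mono_set hIoc)
    (fun κ hκ => (hpos κ (hIoc hκ)).le) hδη.le hs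
  have hT := fun s (hs : 0 ≤ s) => setIntegral_mul_exp_neg_mul_le (hg.mono_set hIoo)
    (fun κ hκ => (hpos κ (hIoo hκ)).le) hs
  have hTN := tendsto_div_nhds_zero_of_exp_bounds hc hδη
    (Eventually.of_forall fun s => setIntegral_nonneg measurableSet_Ioo
      fun κ hκ => mul_nonneg (hpos κ (hIoo hκ)).le (exp_nonneg _))
    (eventually_ge_atTop 0 |>.mono hT) (eventually_ge_atTop 0 |>.mono hN)
  refine (tendsto_div_add_nhds_one ((eventually_ge_atTop 0).mono fun s hs =>
    ((mul_pos hc (exp_pos _)).trans_le (hN s hs)).ne') hTN).congr fun s => ?_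
  rw [setIntegral_Ioo_eq_Ioc_add_Ioo (hg.mul_exp_neg_mul measurableSet_Ioo
    (Metric.isBounded_Ioo l u) s) hη]

end ExponentialTilting

theorem posterior_tail_robustness_prob_general (a K : ℝ)
    (L : ℝ → ℝ)
    (hLmeas : Measurable L)
    (hLpos : ∀ t > 0, 0 < L t)
    (hnorm : K * ∫ t in Ioi (0:ℝ), t ^ (-a - 1) * L t = 1)
    (τ η : ℝ) (hτ : 0 < τ) (hη : η ∈ Ioo (0:ℝ) 1) :
    Tendsto
      (fun x : ℝ =>
        (∫ κ in Ioc (0:ℝ) η, postDens a L τ x κ) /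
          (∫ κ in Ioo (0:ℝ) 1, postDens a L τ x κ))
      atTop (𝓝 1) := by
  have hF : IntegrableOn (fun t => t ^ (-a - 1) * L t) (Ioi 0) := by
    -- otherwise the Bochner integral in `hnorm` would be the junk value `0`
    by_contra h
    rw [integral_undef h, mul_zero] at hnorm
    exact zero_ne_one hnorm
  have hc : (0 : ℝ) < 1 / τ ^ 2 := by positivity
  have hx : Tendsto (fun x : ℝ => x ^ 2 / 2) atTop atTop :=
    (tendsto_pow_atTop two_ne_zero).atTop_div_const two_pos
  refine ((tendsto_setIntegral_Ioc_mul_exp_div_setIntegral_Ioo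
    (integrableOn_rpow_mul_one_sub_rpow_mul_comp hc hLmeas (fun t ht => (hLpos t ht).le) hF)
    (fun κ hκ => ?_) hη).comp hx).congr fun x => ?_
  · have := hLpos _ (mul_one_div_sub_one_pos hc hκ)
    have := hκ.1
    have : 0 < 1 - κ := sub_pos.2 hκ.2
    positivity
  · simp only [Function.comp, postDens, neg_div, mul_div_assoc]

/-- Corollary 4.4: for each fixed `τ > 0` and each fixed `η ∈ (0,1)`,
`P(κ ≤ η | x, τ) → 1` as `x → ∞`. -/
theorem posterior_tail_robustness_prob (a K : ℝ) (ha : 0 < a) (hK : 0 < K)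
    (L : ℝ → ℝ)
    (hLmeas : Measurable L)
    (hLpos : ∀ t > 0, 0 < L t)
    (hnorm : K * ∫ t in Ioi (0:ℝ), t ^ (-a - 1) * L t = 1)
    (τ η : ℝ) (hτ : 0 < τ) (hη : η ∈ Ioo (0:ℝ) 1) :
    Tendsto
      (fun x : ℝ =>
        (∫ κ in Ioc (0:ℝ) η, postDens a L τ x κ) /
          (∫ κ in Ioo (0:ℝ) 1, postDens a L τ x κ))
      atTop (𝓝 1) :=
  posterior_tail_robustness_prob_general a K L hLmeas hLpos hnorm τ η hτ hη
end

section
/- Under the posterior π(κ | x, τ) ∝ κ^{a-1/2}(1-κ)^{-a-1} L((1/τ²)(1/κ-1)) e^{-κx²/2}, for each fixed τ > 0, E(1-κ | x, τ) → 1 as x → ∞. -/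
/-!
At observation `x` the posterior is the exponential tilt `g(κ) e^{-sκ}`, `s = x²/2`, of the
posterior `g` at `x = 0`. The substitution `κ = 1/(1 + τ²t)` turns `g` into the local-scale
density `t^{-a-1} L(t)` times the factor `(τ²)^{-a} (1 + τ²t)^{-1/2}`, so `g` is integrable on
`(0,1)`. For any positive integrable `g` on `(0,1)` the tilted mean of `κ` tends to `0`: above a
level `δ` the tilted mass is at most `e^{-sδ} ∫ g`, while the total tilted mass is at least
`e^{-sδ/2} ∫_0^{δ/2} g`.
-/

open MeasureTheory Filter Set Topology

noncomputable def laplaceIoo (g : ℝ → ℝ) (s : ℝ) : ℝ :=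
  ∫ κ in Ioo 0 1, g κ * Real.exp (-(s * κ))

section ExponentialTilting

variable {g : ℝ → ℝ}

theorem integrableOn_Ioo_continuous_mul {h : ℝ → ℝ} (hh : Continuous h)
    (hg : IntegrableOn g (Ioo 0 1)) : IntegrableOn (fun κ => h κ * g κ) (Ioo 0 1) :=
  IntegrableOn.continuousOn_mul_of_subset hh.continuousOn hg isCompact_Icc measurableSet_Ioo
    Ioo_subset_Icc_self

theorem integrableOn_Ioo_mul_exp_neg_mul (hg : IntegrableOn g (Ioo 0 1)) (s : ℝ) :
    IntegrableOn (fun κ => g κ * Real.exp (-(s * κ))) (Ioo 0 1) :=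
  (integrableOn_Ioo_continuous_mul (h := fun κ => Real.exp (-(s * κ))) (by fun_prop)
    hg).congr_fun (fun _ _ => mul_comm _ _) measurableSet_Ioo

theorem laplaceIoo_mul_id_nonneg (hpos : ∀ κ ∈ Ioo (0 : ℝ) 1, 0 < g κ) (s : ℝ) :
    0 ≤ laplaceIoo (fun κ => κ * g κ) s :=
  setIntegral_nonneg measurableSet_Ioo fun κ hκ =>
    mul_nonneg (mul_nonneg hκ.1.le (hpos κ hκ).le) (Real.exp_pos _).le

theorem laplaceIoo_one_sub_mul (hg : IntegrableOn g (Ioo 0 1)) (s : ℝ) :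
    laplaceIoo (fun κ => (1 - κ) * g κ) s =
      laplaceIoo g s - laplaceIoo (fun κ => κ * g κ) s := by
  rw [laplaceIoo, laplaceIoo, laplaceIoo, ← integral_sub (integrableOn_Ioo_mul_exp_neg_mul hg s)
    (integrableOn_Ioo_mul_exp_neg_mul
      (integrableOn_Ioo_continuous_mul (h := fun κ => κ) continuous_id hg) s)]
  congr 1 with κ
  ring

variable (hg : IntegrableOn g (Ioo 0 1)) (hpos : ∀ κ ∈ Ioo (0 : ℝ) 1, 0 < g κ)
include hg hpos

theorem setIntegral_Ioo_pos {δ : ℝ} (hδ : 0 < δ) (hδ1 : δ ≤ 1) :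
    0 < ∫ κ in Ioo 0 δ, g κ := by
  have hsub : Ioo 0 δ ⊆ Ioo (0 : ℝ) 1 := Ioo_subset_Ioo_right hδ1
  rw [setIntegral_pos_iff_support_of_nonneg_ae
    ((ae_restrict_mem measurableSet_Ioo).mono fun κ hκ => (hpos κ (hsub hκ)).le)
    (hg.mono_set hsub),
    (inter_eq_right (s := Function.support g)).2 fun κ hκ => (hpos κ (hsub hκ)).ne']
  simpa using hδ

theorem exp_mul_setIntegral_le_laplaceIoo {s δ : ℝ} (hs : 0 ≤ s) (hδ1 : δ ≤ 1) :
    Real.exp (-(s * δ)) * ∫ κ in Ioo 0 δ, g κ ≤ laplaceIoo g s := by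
  have hsub : Ioo 0 δ ⊆ Ioo (0 : ℝ) 1 := Ioo_subset_Ioo_right hδ1
  have hint := integrableOn_Ioo_mul_exp_neg_mul hg s
  calc Real.exp (-(s * δ)) * ∫ κ in Ioo 0 δ, g κ
      = ∫ κ in Ioo 0 δ, Real.exp (-(s * δ)) * g κ := (integral_const_mul _ _).symm
    _ ≤ ∫ κ in Ioo 0 δ, g κ * Real.exp (-(s * κ)) := by
      refine setIntegral_mono_on ((hg.mono_set hsub).const_mul _) (hint.mono_set hsub)
        measurableSet_Ioo fun κ hκ => ?_
      rw [mul_comm]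
      gcongr
      · exact (hpos κ (hsub hκ)).le
      · exact hκ.2.le
    _ ≤ laplaceIoo g s :=
      setIntegral_mono_set hint
        ((ae_restrict_mem measurableSet_Ioo).mono fun κ hκ =>
          mul_nonneg (hpos κ hκ).le (Real.exp_pos _).le)
        hsub.eventuallyLE

theorem laplaceIoo_mul_id_le {s δ : ℝ} (hs : 0 ≤ s) (hδ : 0 ≤ δ) :
    laplaceIoo (fun κ => κ * g κ) s ≤
      δ * laplaceIoo g s + Real.exp (-(s * δ)) * ∫ κ in Ioo 0 1, g κ := by
  have hint := integrableOn_Ioo_mul_exp_neg_mul hg s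
  rw [laplaceIoo, laplaceIoo, ← integral_const_mul, ← integral_const_mul,
    ← integral_add (hint.const_mul δ) (hg.const_mul _)]
  refine setIntegral_mono_on
    (integrableOn_Ioo_mul_exp_neg_mul
      (integrableOn_Ioo_continuous_mul (h := fun κ => κ) continuous_id hg) s)
    ((hint.const_mul δ).add (hg.const_mul _)) measurableSet_Ioo fun κ hκ => ?_
  have hgκ := (hpos κ hκ).le
  have he := (Real.exp_pos (-(s * κ))).le
  rcases le_or_gt κ δ with hκδ | hδκ
  · have : 0 ≤ Real.exp (-(s * δ)) * g κ := by positivity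
    calc κ * g κ * Real.exp (-(s * κ)) ≤ δ * (g κ * Real.exp (-(s * κ))) := by
          rw [mul_assoc]; gcongr
      _ ≤ _ := le_add_of_nonneg_right this
  · have : 0 ≤ δ * (g κ * Real.exp (-(s * κ))) := by positivity
    calc κ * g κ * Real.exp (-(s * κ)) ≤ 1 * g κ * Real.exp (-(s * δ)) := by
          gcongr
          exact hκ.2.le
      _ = Real.exp (-(s * δ)) * g κ := by ring
      _ ≤ _ := le_add_of_nonneg_left this

theorem laplaceIoo_pos {s : ℝ} (hs : 0 ≤ s) : 0 < laplaceIoo g s :=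
  (mul_pos (Real.exp_pos _) (setIntegral_Ioo_pos hg hpos one_pos le_rfl)).trans_le
    (exp_mul_setIntegral_le_laplaceIoo hg hpos hs le_rfl)

theorem laplaceIoo_mul_id_div_le {s δ : ℝ} (hs : 0 ≤ s) (hδ : 0 < δ) (hδ1 : δ ≤ 1) :
    laplaceIoo (fun κ => κ * g κ) s / laplaceIoo g s ≤
      δ + (∫ κ in Ioo 0 1, g κ) / (∫ κ in Ioo 0 (δ / 2), g κ) *
        Real.exp (-(s * (δ / 2))) := by
  set C := ∫ κ in Ioo 0 1, g κ
  set c := ∫ κ in Ioo 0 (δ / 2), g κ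
  set e := Real.exp (-(s * (δ / 2)))
  have hc : 0 < c := setIntegral_Ioo_pos hg hpos (by linarith) (by linarith)
  have hC : 0 ≤ C := (setIntegral_Ioo_pos hg hpos one_pos le_rfl).le
  have hD : e * c ≤ laplaceIoo g s :=
    exp_mul_setIntegral_le_laplaceIoo hg hpos hs (by linarith)
  have hDpos : 0 < laplaceIoo g s := lt_of_lt_of_le (by positivity) hD
  have hsq : Real.exp (-(s * δ)) = e * e := by rw [← Real.exp_add]; ring_nf
  rw [div_le_iff₀ hDpos]
  calc laplaceIoo (fun κ => κ * g κ) s ≤ δ * laplaceIoo g s + Real.exp (-(s * δ)) * C :=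
        laplaceIoo_mul_id_le hg hpos hs hδ.le
    _ = δ * laplaceIoo g s + C / c * e * (e * c) := by rw [hsq]; field_simp
    _ ≤ δ * laplaceIoo g s + C / c * e * laplaceIoo g s := by gcongr
    _ = (δ + C / c * e) * laplaceIoo g s := by ring

theorem tendsto_laplaceIoo_mul_id_div :
    Tendsto (fun s => laplaceIoo (fun κ => κ * g κ) s / laplaceIoo g s) atTop (𝓝 0) := by
  refine tendsto_order.2 ⟨fun b hb => ?_, fun b hb => ?_⟩
  · filter_upwards [eventually_ge_atTop 0] with s hs
    exact hb.trans_le (div_nonneg (laplaceIoo_mul_id_nonneg hpos s)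
      (laplaceIoo_pos hg hpos hs).le)
  set δ := min (b / 2) 1
  have hδ : 0 < δ := lt_min (half_pos hb) one_pos
  have hexp : Tendsto (fun s => Real.exp (-(s * (δ / 2)))) atTop (𝓝 0) :=
    Real.tendsto_exp_neg_atTop_nhds_zero.comp (tendsto_id.atTop_mul_const (half_pos hδ))
  have hbound := (tendsto_const_nhds (x := δ)).add (hexp.const_mul
    ((∫ κ in Ioo 0 1, g κ) / ∫ κ in Ioo 0 (δ / 2), g κ))
  rw [mul_zero, add_zero] at hbound
  filter_upwards [eventually_ge_atTop 0,
    hbound.eventually_lt_const ((min_le_left _ _).trans_lt (half_lt_self hb))] with s hs hlt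
  exact (laplaceIoo_mul_id_div_le hg hpos hs hδ (min_le_right _ _)).trans_lt hlt

theorem tendsto_laplaceIoo_one_sub_mul_div :
    Tendsto (fun s => laplaceIoo (fun κ => (1 - κ) * g κ) s / laplaceIoo g s)
      atTop (𝓝 1) := by
  have h := (tendsto_laplaceIoo_mul_id_div hg hpos).const_sub 1
  rw [sub_zero] at h
  refine h.congr' ?_
  filter_upwards [eventually_ge_atTop 0] with s hs
  rw [laplaceIoo_one_sub_mul hg, sub_div, div_self (laplaceIoo_pos hg hpos hs).ne']

end ExponentialTilting

theorem postDens_eq_mul_exp (a : ℝ) (L : ℝ → ℝ) (τ x κ : ℝ) :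
    postDens a L τ x κ = postDens a L τ 0 κ * Real.exp (-(x ^ 2 / 2 * κ)) := by
  simp only [postDens]
  ring_nf
  simp

theorem postDens_zero_pos {a : ℝ} {L : ℝ → ℝ} (hLpos : ∀ t > 0, 0 < L t) {τ : ℝ}
    (hτ : τ ≠ 0) {κ : ℝ} (hκ : κ ∈ Ioo 0 1) : 0 < postDens a L τ 0 κ := by
  have harg : 0 < 1 / τ ^ 2 * (1 / κ - 1) :=
    mul_pos (by positivity) (sub_pos.2 ((one_lt_div hκ.1).2 hκ.2))
  exact mul_pos (mul_pos (mul_pos (Real.rpow_pos_of_pos hκ.1 _)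
    (Real.rpow_pos_of_pos (sub_pos.2 hκ.2) _)) (hLpos _ harg)) (Real.exp_pos _)

section Substitution

variable {c : ℝ}

theorem hasDerivAt_inv_one_add_mul {t : ℝ} (ht : 1 + c * t ≠ 0) :
    HasDerivAt (fun t => (1 + c * t)⁻¹) (-c / (1 + c * t) ^ 2) t := by
  have h := ((hasDerivAt_id t).const_mul c).const_add 1
  rw [mul_one] at h
  exact h.inv ht

theorem injective_inv_one_add_mul (hc : c ≠ 0) :
    Function.Injective fun t : ℝ => (1 + c * t)⁻¹ := fun s t h => by
  simpa [hc] using inv_inj.1 h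

theorem image_inv_one_add_mul_Ioi (hc : 0 < c) :
    (fun t => (1 + c * t)⁻¹) '' Ioi 0 = Ioo 0 1 := by
  ext κ
  constructor
  · rintro ⟨t, ht, rfl⟩
    have : 1 < 1 + c * t := lt_add_of_pos_right 1 (mul_pos hc ht)
    exact ⟨inv_pos.2 (one_pos.trans this), inv_lt_one_of_one_lt₀ this⟩
  · rintro ⟨h0, h1⟩
    refine ⟨(κ⁻¹ - 1) / c, div_pos (sub_pos.2 (one_lt_inv₀ h0 |>.2 h1)) hc, ?_⟩
    field_simp
    simp

end Substitution

theorem abs_deriv_mul_postDens_zero {a : ℝ} {L : ℝ → ℝ} {τ t : ℝ} (hτ : τ ≠ 0)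
    (ht : 0 < t) :
    |-τ ^ 2 / (1 + τ ^ 2 * t) ^ 2| * postDens a L τ 0 (1 + τ ^ 2 * t)⁻¹ =
      (τ ^ 2) ^ (-a) * (1 + τ ^ 2 * t) ^ (-(1 / 2) : ℝ) * (t ^ (-a - 1) * L t) := by
  set c := τ ^ 2
  set u := 1 + c * t
  have hc : 0 < c := by positivity
  have hu : 0 < u := by positivity
  have hc' : c ^ (-a) = c * c ^ (-a - 1) := by
    conv_lhs => rw [show -a = 1 + (-a - 1) by ring, Real.rpow_add hc, Real.rpow_one]
  have hu' : u ^ (-a - 1) = (u ^ (-(1 / 2) : ℝ) * u ^ (a - 1 / 2) * u ^ 2)⁻¹ := by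
    rw [← Real.rpow_add hu, ← Real.rpow_natCast, ← Real.rpow_add hu, ← Real.rpow_neg hu.le]
    ring_nf
  have hL : 1 / c * (1 / u⁻¹ - 1) = t := by field_simp; ring
  have h1 : 1 - u⁻¹ = c * t / u := by field_simp; ring
  rw [postDens, hL, h1, abs_div, abs_neg, abs_of_pos hc, abs_of_pos (by positivity),
    Real.inv_rpow hu.le, Real.div_rpow (by positivity) hu.le, Real.mul_rpow hc.le ht.le, hc',
    hu']
  field_simp
  simp

theorem integrableOn_postDens_zero {a : ℝ} {L : ℝ → ℝ} {τ : ℝ} (hτ : τ ≠ 0)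
    (hL : IntegrableOn (fun t => t ^ (-a - 1) * L t) (Ioi 0)) :
    IntegrableOn (postDens a L τ 0) (Ioo 0 1) := by
  have hc : 0 < τ ^ 2 := by positivity
  have hu : ∀ t ∈ Ioi (0 : ℝ), 1 ≤ 1 + τ ^ 2 * t := fun t ht =>
    le_add_of_nonneg_right (mul_pos hc ht).le
  rw [← image_inv_one_add_mul_Ioi hc, integrableOn_image_iff_integrableOn_abs_deriv_smul
    measurableSet_Ioi (fun t ht => (hasDerivAt_inv_one_add_mul
      (one_pos.trans_le (hu t ht)).ne').hasDerivWithinAt) (injective_inv_one_add_mul hc.ne').injOn]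
  refine IntegrableOn.congr_fun ?_ (fun t ht => by
    rw [smul_eq_mul, abs_deriv_mul_postDens_zero hτ ht]) measurableSet_Ioi
  refine hL.bdd_mul (c := (τ ^ 2) ^ (-a)) (Measurable.aestronglyMeasurable (by fun_prop)) ?_
  filter_upwards [ae_restrict_mem measurableSet_Ioi] with t ht
  have hc' : 0 ≤ (τ ^ 2) ^ (-a) := by positivity
  rw [Real.norm_of_nonneg (mul_nonneg hc' (Real.rpow_nonneg (zero_le_one.trans (hu t ht)) _))]
  exact mul_le_of_le_one_right hc' (Real.rpow_le_one_of_one_le_of_nonpos (hu t ht) (by norm_num))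

theorem posterior_tail_robustness_mean_general (a K : ℝ)
    (L : ℝ → ℝ)
    (hLpos : ∀ t > 0, 0 < L t)
    (hnorm : K * ∫ t in Ioi (0:ℝ), t ^ (-a - 1) * L t = 1)
    (τ : ℝ) (hτ : 0 < τ) :
    Tendsto
      (fun x : ℝ =>
        (∫ κ in Ioo (0:ℝ) 1, (1 - κ) * postDens a L τ x κ) /
          (∫ κ in Ioo (0:ℝ) 1, postDens a L τ x κ))
      atTop (𝓝 1) := by
  have hL : IntegrableOn (fun t => t ^ (-a - 1) * L t) (Ioi 0) :=
    Integrable.of_integral_ne_zero (right_ne_zero_of_mul_eq_one hnorm)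
  have hx : Tendsto (fun x : ℝ => x ^ 2 / 2) atTop atTop :=
    (tendsto_pow_atTop two_ne_zero).atTop_div_const two_pos
  refine ((tendsto_laplaceIoo_one_sub_mul_div (integrableOn_postDens_zero hτ.ne' hL)
    fun κ hκ => postDens_zero_pos hLpos hτ.ne' hκ).comp hx).congr fun x => ?_
  simp only [Function.comp_apply, laplaceIoo, postDens_eq_mul_exp a L τ x, mul_assoc]

/-- Corollary 4.5: for each fixed `τ > 0`, `E(1-κ | x, τ) → 1` as `x → ∞`. -/
theorem posterior_tail_robustness_mean (a K : ℝ) (ha : 0 < a) (hK : 0 < K)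
    (L : ℝ → ℝ)
    (hLmeas : Measurable L)
    (hLpos : ∀ t > 0, 0 < L t)
    (hnorm : K * ∫ t in Ioi (0:ℝ), t ^ (-a - 1) * L t = 1)
    (τ : ℝ) (hτ : 0 < τ) :
    Tendsto
      (fun x : ℝ =>
        (∫ κ in Ioo (0:ℝ) 1, (1 - κ) * postDens a L τ x κ) /
          (∫ κ in Ioo (0:ℝ) 1, postDens a L τ x κ))
      atTop (𝓝 1) :=
  posterior_tail_robustness_mean_general a K L hLpos hnorm τ hτ
end
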